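/- Fix n ≥ 1 and suppose (R*_1,…,R*_n) are mutually independent random variables on (0,1), each n-trim, each taking each value o_s (1 ≤ s ≤ m) with probability 2^{−(M+1)}, and satisfying R*_1(x) + ⋯ + R*_n(x) = S*_n(x) for all x ∈ (0,1). Then for every ℓ < 2^{n(M+1)} there is a unique ℓ′ < 2^{n(M+1)} such that the constant value of the vector (R*_1,…,R*_n) on D_{n,ℓ} equals the constant value of (R_1,…,R_n) on E_{n,ℓ′}, and the map π : ℓ ↦ ℓ′ is an admissible permutation of {0,…,2^{n(M+1)}−1}. -/

import Mathlib

open MeasureTheory Set ProbabilityTheory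
open scoped ENNReal

attribute [local instance] MeasureTheory.Measure.Subtype.measureSpace
attribute [local instance] Classical.propDecidable

noncomputable section

namespace DGS

/-- The i-th binary digit (i ≥ 1) of `x ∈ (0,1)`, using the binary expansion with
infinitely many zero digits. -/
def eps (i : ℕ) (x : ℝ) : ℕ := (⌊x * 2 ^ i⌋).toNat % 2

/-- The r-th element `j_{i,r} = i(i-1)(M+1)/2 + r·i` of `J̄_i`, for `1 ≤ r ≤ M+1`. -/
def jidx (M i r : ℕ) : ℕ := i * (i - 1) * (M + 1) / 2 + r * i

/-- The q-th binary digit (1-indexed, most significant first) of `ℓ` viewed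
as a `w`-bit number: `bit_q(ℓ) = ⌊ℓ / 2^(w-q)⌋ mod 2`. -/
def bitOf (w ℓ q : ℕ) : ℕ := ℓ / 2 ^ (w - q) % 2

/-- The dyadic interval `D_{n,ℓ}` of depth `n(M+1)`. -/
def D (M n ℓ : ℕ) : Set ℝ :=
  if ℓ = 0 then Ioo 0 ((2 : ℝ) ^ (n * (M + 1)))⁻¹
  else Ico ((ℓ : ℝ) * ((2 : ℝ) ^ (n * (M + 1)))⁻¹) (((ℓ : ℝ) + 1) * ((2 : ℝ) ^ (n * (M + 1)))⁻¹)

/-- `E_{n,ℓ}`: the set of `x ∈ (0,1)` whose binary digits along `J̄^n` are prescribed by the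
ℓ-th member of the lexicographic enumeration of `{0,1}^{J̄^n}` (coordinates listed by
increasing index); the element `j_{i,r}` of `J̄^n` is its `((i-1)(M+1)+r)`-th smallest member. -/
def E (M n ℓ : ℕ) : Set ℝ :=
  { x | x ∈ Ioo (0:ℝ) 1 ∧ ∀ i ∈ Finset.Icc 1 n, ∀ r ∈ Finset.Icc 1 (M + 1),
      eps (jidx M i r) x = bitOf (n * (M + 1)) ℓ ((i - 1) * (M + 1) + r) }

/-- `S_n = R_1 + ⋯ + R_n`. -/
def S (R : ℕ → ℝ → ℝ) (n : ℕ) (x : ℝ) : ℝ := ∑ i ∈ Finset.Icc 1 n, R i x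

/-- The right-continuous quantile of `S_n`:
`S*_n(x) = inf { t : λ{y ∈ (0,1) : S_n(y) ≤ t} > x }`. -/
def Sstar (R : ℕ → ℝ → ℝ) (n : ℕ) (x : ℝ) : ℝ :=
  sInf { t : ℝ | ENNReal.ofReal x < volume { y | y ∈ Ioo (0:ℝ) 1 ∧ S R n y ≤ t } }

/-- Lebesgue measure restricted to `(0,1)`. -/
def μ01 : Measure ℝ := volume.restrict (Ioo 0 1)

/-- `Y` is n-trim: constant on each dyadic interval of depth `n(M+1)`. -/
def Trim (M n : ℕ) (Y : ℝ → ℝ) : Prop :=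
  ∀ ℓ < 2 ^ (n * (M + 1)), ∀ x ∈ D M n ℓ, ∀ y ∈ D M n ℓ, Y x = Y y

/-- `π` is an admissible permutation of `{0, …, 2^(n(M+1)) - 1}`:
`S*_n(x) = S_n(y)` whenever `x ∈ D_{n,ℓ}` and `y ∈ E_{n,π(ℓ)}`. -/
def Admissible (M : ℕ) (R : ℕ → ℝ → ℝ) (n : ℕ)
    (π : Equiv.Perm (Fin (2 ^ (n * (M + 1))))) : Prop :=
  ∀ ℓ : Fin (2 ^ (n * (M + 1))), ∀ x ∈ D M n (ℓ : ℕ), ∀ y ∈ E M n ((π ℓ : Fin _) : ℕ),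
    Sstar R n x = S R n y

/-- The standing assumptions: `O` depends bijectively on the first `M+1` binary digits,
`o` is the increasing enumeration of its `2^(M+1)` values, and `R_i(x) = O(P_i(x))`,
where `P_i(x)` has digits `ε_{j_{i,r}}(x)`. -/
structure Setup (M : ℕ) (O : ℝ → ℝ) (o : Fin (2 ^ (M + 1)) → ℝ) (R : ℕ → ℝ → ℝ) : Prop where
  O_dep : ∀ x ∈ Ioo (0:ℝ) 1, ∀ y ∈ Ioo (0:ℝ) 1,
    (∀ r ∈ Finset.Icc 1 (M + 1), eps r x = eps r y) → O x = O y
  O_inj : ∀ x ∈ Ioo (0:ℝ) 1, ∀ y ∈ Ioo (0:ℝ) 1,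
    O x = O y → ∀ r ∈ Finset.Icc 1 (M + 1), eps r x = eps r y
  o_mono : StrictMono o
  o_range : Set.range o = O '' Ioo (0:ℝ) 1
  R_def : ∀ i, 1 ≤ i → ∀ x ∈ Ioo (0:ℝ) 1, ∀ y ∈ Ioo (0:ℝ) 1,
    (∀ r ∈ Finset.Icc 1 (M + 1), eps r y = eps (jidx M i r) x) → R i x = O y

/-- The sample space `Ω = (0,1)` (with the subspace Lebesgue measure). -/
abbrev Ω : Type := ↥(Set.Ioo (0:ℝ) 1)

/-- A "good" n-tuple of random variables on `(0,1)`: mutually independent, each n-trim,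
each taking each value `o_s` with probability `2^{-(M+1)}`, and summing pointwise to `S*_n`. -/
def GoodTuple (M : ℕ) (o : Fin (2 ^ (M + 1)) → ℝ) (R : ℕ → ℝ → ℝ) (n : ℕ)
    (Tup : Fin n → Ω → ℝ) : Prop :=
  iIndepFun (m := fun _ => Real.measurableSpace) Tup (volume : Measure Ω) ∧
  (∀ i : Fin n, ∀ ℓ < 2 ^ (n * (M + 1)), ∀ x y : Ω,
      (x : ℝ) ∈ D M n ℓ → (y : ℝ) ∈ D M n ℓ → Tup i x = Tup i y) ∧
  (∀ i : Fin n, ∀ s : Fin (2 ^ (M + 1)),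
      volume { ω : Ω | Tup i ω = o s } = ((2 : ℝ≥0∞) ^ (M + 1))⁻¹) ∧
  (∀ ω : Ω, ∑ i, Tup i ω = Sstar R n (ω : ℝ))

/-- `γ_{n,t}`: the sum of the multinomial coefficients `binom(n,k)` over the
multinomial vectors `k ∈ K_n` with `k·o = vt`. -/
def gammaCoef (M : ℕ) (o : Fin (2 ^ (M + 1)) → ℝ) (n : ℕ) (vt : ℝ) : ℕ :=
  ∑ k ∈ Finset.univ.filter (fun k : Fin (2 ^ (M + 1)) → Fin (n + 1) =>
      (∑ s, (k s : ℕ)) = n ∧ (∑ s, ((k s : ℕ) : ℝ) * o s) = vt),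
    Nat.multinomial Finset.univ (fun s => (k s : ℕ))

/-- `SMC(n,t) = Σ { binom(n,k) : k ∈ K_n, k·o < v_n^t }` for `t ≤ T_n`, with the
convention `SMC(n, T_n + 1) = 2^(n(M+1))`. -/
def SMC (M : ℕ) (o : Fin (2 ^ (M + 1)) → ℝ) (n T : ℕ) (v : ℕ → ℝ) (t : ℕ) : ℕ :=
  if t = T + 1 then 2 ^ (n * (M + 1))
  else ∑ k ∈ Finset.univ.filter (fun k : Fin (2 ^ (M + 1)) → Fin (n + 1) =>
      (∑ s, (k s : ℕ)) = n ∧ (∑ s, ((k s : ℕ) : ℝ) * o s) < v t),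
    Nat.multinomial Finset.univ (fun s => (k s : ℕ))

/-- The level set `{ ℓ < w : f ℓ = t }`; with `f = IStep` this is `IA_{n,t}`, with
`f = IWeight` this is `IB_{n,t}`. -/
def levelSet (w : ℕ) (f : ℕ → ℕ) (t : ℕ) : Finset ℕ :=
  (Finset.range w).filter fun ℓ => f ℓ = t

/-- The set `B_{n,t,ξ,ζ}` from the binary-search decomposition of `IB_{n,t} ∩ {0,…,ξ}`. -/
def Bzeta (w : ℕ) (IBt : Finset ℕ) (ξ ζ : ℕ) : Finset ℕ :=
  if bitOf w ξ ζ = 0 then ∅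
  else (IBt.filter fun ℓ =>
        bitOf w ℓ ζ = 0 ∧ ∀ j, 1 ≤ j → j < ζ → bitOf w ℓ j = bitOf w ξ j) ∪
    (if ξ ∈ IBt ∧ ∀ j, ζ < j → j ≤ w → bitOf w ξ j = 0 then {ξ} else ∅)
/-! ### Auxiliary lemmas -/

lemma bitOf_lt_two (w ℓ q : ℕ) : bitOf w ℓ q < 2 := Nat.mod_lt _ (by norm_num)

lemma bitOf_le_one (w ℓ q : ℕ) : bitOf w ℓ q ≤ 1 := by
  have := bitOf_lt_two w ℓ q; omega

lemma bitOf_eq_testBit (w ℓ q : ℕ) : bitOf w ℓ q = (ℓ.testBit (w - q)).toNat := by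
  rw [Nat.testBit_eq_decide_div_mod_eq]
  unfold bitOf
  rcases Nat.mod_two_eq_zero_or_one (ℓ / 2 ^ (w - q)) with h | h <;> simp [h]

lemma nat_lt_div_add_one_mul (L k : ℕ) (h : 0 < k) : L < (L / k + 1) * k := by
  have h1 := Nat.div_add_mod L k
  have h2 := Nat.mod_lt L h
  nlinarith

/-- Digits of a real number in a dyadic interval of depth `w`. -/
lemma eps_eq_bitOf {w L r : ℕ} {x : ℝ} (hr1 : 1 ≤ r) (hrw : r ≤ w)
    (h1 : (L : ℝ) * ((2:ℝ) ^ w)⁻¹ ≤ x) (h2 : x < ((L : ℝ) + 1) * ((2:ℝ) ^ w)⁻¹) :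
    eps r x = bitOf w L r := by
  set k := w - r with hk
  set q := L / 2 ^ k with hq
  have hwk : w = k + r := by omega
  have hA : (q:ℝ) * 2^k ≤ (L:ℝ) := by exact_mod_cast Nat.div_mul_le_self L (2^k)
  have hBn : L + 1 ≤ (q + 1) * 2 ^ k := nat_lt_div_add_one_mul L (2^k) (by positivity)
  have hB : (L:ℝ) + 1 ≤ ((q:ℝ)+1) * 2^k := by exact_mod_cast hBn
  have h2k : (0:ℝ) < 2 ^ k := by positivity
  have h2w : (0:ℝ) < 2 ^ w := by positivity
  have h1' : (L:ℝ) ≤ x * 2^w := by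
    rw [← div_eq_mul_inv, div_le_iff₀ h2w] at h1; exact h1
  have h2' : x * 2^w < (L:ℝ) + 1 := by
    rw [← div_eq_mul_inv, lt_div_iff₀ h2w] at h2; exact h2
  have hpow : x * 2^w = (x * 2^r) * 2^k := by rw [hwk, pow_add]; ring
  have hfloor : ⌊x * 2 ^ r⌋ = (q : ℤ) := by
    rw [Int.floor_eq_iff]
    constructor
    · push_cast; nlinarith
    · push_cast; nlinarith
  unfold eps bitOf
  rw [hfloor]
  simp [← hq]
  rfl

/-- Build a natural number from prescribed bits. -/
def bsum (w : ℕ) (f : ℕ → ℕ) : ℕ := ∑ k ∈ Finset.range w, f k * 2 ^ k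

lemma bsum_succ (w : ℕ) (f : ℕ → ℕ) :
    bsum (w+1) f = 2 * bsum w (fun k => f (k+1)) + f 0 := by
  unfold bsum
  rw [Finset.sum_range_succ' (fun k => f k * 2 ^ k) w]
  rw [Finset.mul_sum]
  congr 1
  · apply Finset.sum_congr rfl; intro k _; ring
  · simp

lemma bsum_lt (w : ℕ) (f : ℕ → ℕ) (hf : ∀ k, f k ≤ 1) : bsum w f < 2 ^ w := by
  induction w generalizing f with
  | zero => simp [bsum]
  | succ w ih =>
    have := ih (fun k => f (k+1)) (fun k => hf (k+1))
    have h0 := hf 0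
    rw [bsum_succ]
    rw [pow_succ]
    omega

lemma bsum_testBit (w : ℕ) (f : ℕ → ℕ) (hf : ∀ k, f k ≤ 1) :
    ∀ k < w, (bsum w f).testBit k = decide (f k = 1) := by
  induction w generalizing f with
  | zero => omega
  | succ w ih =>
    intro k hk
    have hrec := bsum_succ w f
    have hmod : bsum (w+1) f % 2 = f 0 := by have := hf 0; omega
    have hdiv : bsum (w+1) f / 2 = bsum w (fun k => f (k+1)) := by omega
    cases k with
    | zero => rw [Nat.testBit_zero, hmod]
    | succ j =>
      rw [Nat.testBit_succ, hdiv]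
      exact ih (fun k => f (k+1)) (fun k => hf (k+1)) j (by omega)

lemma exists_nat_with_bits (w : ℕ) (f : ℕ → ℕ) (hf : ∀ k, f k ≤ 1) :
    ∃ L < 2 ^ w, ∀ q, 1 ≤ q → q ≤ w → bitOf w L q = f q := by
  refine ⟨bsum w (fun k => f (w - k)), bsum_lt w _ (fun k => hf _), ?_⟩
  intro q hq1 hqw
  rw [bitOf_eq_testBit, bsum_testBit w _ (fun k => hf _) (w - q) (by omega)]
  have : w - (w - q) = q := by omega
  rw [this]
  have := hf q
  interval_cases h : f q <;> simp [h]

/-- Find a real number in `(0,1)` with prescribed binary digits at positions `1..w`. -/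
lemma exists_real_digits (w : ℕ) (f : ℕ → ℕ) (hf : ∀ k, f k ≤ 1) :
    ∃ y ∈ Ioo (0:ℝ) 1, ∀ q, 1 ≤ q → q ≤ w → eps q y = f q := by
  obtain ⟨L, hL, hbit⟩ := exists_nat_with_bits w f hf
  refine ⟨((L:ℝ) + 2⁻¹) * ((2:ℝ) ^ w)⁻¹, ⟨by positivity, ?_⟩, ?_⟩
  · have h2w : (0:ℝ) < 2 ^ w := by positivity
    rw [← div_eq_mul_inv, div_lt_one h2w]
    have : (L:ℝ) + 1 ≤ 2 ^ w := by exact_mod_cast hL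
    linarith
  · intro q hq1 hqw
    rw [eps_eq_bitOf hq1 hqw ?_ ?_, hbit q hq1 hqw]
    · have h2w : (0:ℝ) < ((2:ℝ) ^ w)⁻¹ := by positivity
      nlinarith
    · have h2w : (0:ℝ) < ((2:ℝ) ^ w)⁻¹ := by positivity
      nlinarith

lemma bits_inj {w ℓ₁ ℓ₂ : ℕ} (h1 : ℓ₁ < 2 ^ w) (h2 : ℓ₂ < 2 ^ w)
    (h : ∀ q, 1 ≤ q → q ≤ w → bitOf w ℓ₁ q = bitOf w ℓ₂ q) : ℓ₁ = ℓ₂ := by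
  apply Nat.eq_of_testBit_eq
  intro k
  by_cases hk : k < w
  · have hb := h (w - k) (by omega) (by omega)
    rw [bitOf_eq_testBit, bitOf_eq_testBit] at hb
    have hwk : w - (w - k) = k := by omega
    rw [hwk] at hb
    cases hb1 : ℓ₁.testBit k <;> cases hb2 : ℓ₂.testBit k <;> simp_all
  · have e1 : ℓ₁ < 2 ^ k := lt_of_lt_of_le h1 (Nat.pow_le_pow_right (by norm_num) (by omega))
    have e2 : ℓ₂ < 2 ^ k := lt_of_lt_of_le h2 (Nat.pow_le_pow_right (by norm_num) (by omega))
    rw [Nat.testBit_lt_two_pow e1, Nat.testBit_lt_two_pow e2]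

lemma D_bounds {M n ℓ : ℕ} {x : ℝ} (hx : x ∈ D M n ℓ) :
    (ℓ : ℝ) * ((2:ℝ) ^ (n*(M+1)))⁻¹ ≤ x ∧ x < ((ℓ : ℝ) + 1) * ((2:ℝ) ^ (n*(M+1)))⁻¹ := by
  unfold D at hx
  split_ifs at hx with h
  · subst h
    refine ⟨by simpa using hx.1.le, by simpa using hx.2⟩
  · exact ⟨hx.1, hx.2⟩

lemma eps_of_mem_D {M n ℓ : ℕ} {x : ℝ} (hx : x ∈ D M n ℓ) {q : ℕ} (hq1 : 1 ≤ q)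
    (hqw : q ≤ n*(M+1)) : eps q x = bitOf (n*(M+1)) ℓ q :=
  eps_eq_bitOf hq1 hqw (D_bounds hx).1 (D_bounds hx).2

lemma D_subset_Ioo {M n ℓ : ℕ} (hℓ : ℓ < 2 ^ (n*(M+1))) : D M n ℓ ⊆ Ioo (0:ℝ) 1 := by
  set w := n*(M+1) with hw
  have h2w : (0:ℝ) < 2 ^ w := by positivity
  have hup : ((ℓ:ℝ)+1) * ((2:ℝ)^w)⁻¹ ≤ 1 := by
    rw [← div_eq_mul_inv, div_le_one h2w]
    have h' : (ℓ:ℝ) + 1 ≤ (2:ℝ)^w := by exact_mod_cast hℓ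
    linarith
  intro x hx
  have hb := D_bounds hx
  refine ⟨?_, lt_of_lt_of_le hb.2 hup⟩
  unfold D at hx
  split_ifs at hx with h
  · exact hx.1
  · have hℓ1 : (1:ℝ) ≤ (ℓ:ℝ) := by exact_mod_cast Nat.one_le_iff_ne_zero.mpr h
    have : (0:ℝ) < (ℓ:ℝ) * ((2:ℝ)^w)⁻¹ := by positivity
    exact lt_of_lt_of_le this hb.1

lemma mem_D_floor_eq {M n ℓ : ℕ} {x : ℝ} (hx : x ∈ D M n ℓ) :
    (ℓ:ℤ) = ⌊x * 2 ^ (n*(M+1))⌋ := by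
  obtain ⟨hl, hr⟩ := D_bounds hx
  have h2w : (0:ℝ) < (2:ℝ) ^ (n*(M+1)) := by positivity
  rw [← div_eq_mul_inv, div_le_iff₀ h2w] at hl
  rw [← div_eq_mul_inv, lt_div_iff₀ h2w] at hr
  symm
  rw [Int.floor_eq_iff]
  constructor
  · push_cast; linarith
  · push_cast; linarith

lemma D_disjoint {M n : ℕ} {ℓ₁ ℓ₂ : ℕ} (h : ℓ₁ ≠ ℓ₂) :
    Disjoint (D M n ℓ₁) (D M n ℓ₂) := by
  rw [Set.disjoint_left]
  intro x h1 h2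
  have e1 := mem_D_floor_eq h1
  have e2 := mem_D_floor_eq h2
  exact h (by exact_mod_cast e1.trans e2.symm)

lemma exists_mem_D {M n : ℕ} {x : ℝ} (hx : x ∈ Ioo (0:ℝ) 1) :
    ∃ ℓ < 2 ^ (n*(M+1)), x ∈ D M n ℓ := by
  set w := n*(M+1) with hw
  have h2w : (0:ℝ) < (2:ℝ) ^ w := by positivity
  have hxw : 0 ≤ x * 2 ^ w := mul_nonneg hx.1.le (by positivity)
  set ℓ := (⌊x * 2 ^ w⌋).toNat with hℓ
  have hfl : 0 ≤ ⌊x * 2 ^ w⌋ := Int.floor_nonneg.mpr hxw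
  have h2 : ((ℓ:ℕ):ℤ) = ⌊x * 2 ^ w⌋ := Int.toNat_of_nonneg hfl
  have hlow : (ℓ:ℝ) ≤ x * 2^w := by
    have h1 := Int.floor_le (x * 2^w)
    rw [← h2] at h1
    exact_mod_cast h1
  have hhigh : x * 2^w < (ℓ:ℝ) + 1 := by
    have h1 := Int.lt_floor_add_one (x * 2^w)
    rw [← h2] at h1
    exact_mod_cast h1
  have hlt : x * 2^w < 2^w := by nlinarith [hx.2]
  refine ⟨ℓ, ?_, ?_⟩
  · have h3 : (ℓ:ℝ) < (2:ℝ)^w := lt_of_le_of_lt hlow hlt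
    exact_mod_cast h3
  · unfold D
    rw [← hw]
    split_ifs with h
    · refine ⟨hx.1, ?_⟩
      rw [h] at hhigh
      rw [show ((2:ℝ)^w)⁻¹ = 1 / 2^w by rw [one_div], lt_div_iff₀ h2w]
      push_cast at hhigh
      linarith
    · constructor
      · rw [← div_eq_mul_inv, div_le_iff₀ h2w]; exact hlow
      · rw [← div_eq_mul_inv, lt_div_iff₀ h2w]; exact hhigh

lemma even_mul_pred (i : ℕ) : 2 ∣ i * (i - 1) := by
  cases i with
  | zero => simp
  | succ j =>
    have : Even (j * (j+1)) := Nat.even_mul_succ_self j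
    obtain ⟨c, hc⟩ := this
    exact ⟨c, by simpa [Nat.mul_comm] using by omega⟩

lemma half_mul (a b : ℕ) (h : 2 ∣ a) : a * b / 2 = a / 2 * b := by
  obtain ⟨c, hc⟩ := h
  subst hc
  rw [mul_assoc, Nat.mul_div_cancel_left _ two_pos, Nat.mul_div_cancel_left _ two_pos]

lemma jidx_eq (M i r : ℕ) : jidx M i r = i * (i-1) / 2 * (M+1) + r * i := by
  unfold jidx
  rw [half_mul _ _ (even_mul_pred i)]

lemma tri_succ (i : ℕ) : (i+1) * i / 2 = i * (i-1) / 2 + i := by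
  cases i with
  | zero => rfl
  | succ j =>
    obtain ⟨c, hc⟩ := even_mul_pred (j+1)
    have h : (j+2) * (j+1) = (j+1) * ((j+1) - 1) + 2 * (j+1) := by simp; ring
    rw [show j+1+1 = j+2 from rfl, h, hc]
    omega

lemma jidx_block {M i : ℕ} : jidx M i (M+1) < jidx M (i+1) 1 := by
  rw [jidx_eq, jidx_eq]
  have h1 : (i+1) - 1 = i := by omega
  rw [h1, tri_succ i, Nat.add_mul]
  nlinarith [Nat.zero_le (i * (i-1) / 2 * (M+1))]

lemma jidx_strict_r {M i r r' : ℕ} (hi : 1 ≤ i) (h : r < r') : jidx M i r < jidx M i r' := by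
  unfold jidx
  have : r * i < r' * i := Nat.mul_lt_mul_of_lt_of_le h (le_refl i) hi
  omega

lemma jidx_mono_r {M i r r' : ℕ} (h : r ≤ r') : jidx M i r ≤ jidx M i r' := by
  unfold jidx
  have : r * i ≤ r' * i := Nat.mul_le_mul_right i h
  omega

lemma jidx_lt_of_lt {M : ℕ} {i i' r r' : ℕ} (hi : 1 ≤ i) (hii : i < i')
    (hr : r ≤ M+1) (hr' : 1 ≤ r') : jidx M i r < jidx M i' r' := by
  have key : ∀ i'', i < i'' → jidx M i r < jidx M i'' 1 := by
    intro i'' hii'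
    induction i'' with
    | zero => omega
    | succ j ih =>
      rcases Nat.lt_or_ge i j with h | h
      · have h1 := ih h
        have h2 : jidx M j 1 ≤ jidx M j (M+1) := jidx_mono_r (by omega)
        have h3 : jidx M j (M+1) < jidx M (j+1) 1 := jidx_block
        omega
      · have hij : i = j := by omega
        subst hij
        have h2 : jidx M i r ≤ jidx M i (M+1) := jidx_mono_r hr
        have h3 : jidx M i (M+1) < jidx M (i+1) 1 := jidx_block
        omega
  have h4 := key i' hii
  have h5 : jidx M i' 1 ≤ jidx M i' r' := jidx_mono_r hr'
  omega

lemma jidx_inj {M i r i' r' : ℕ} (hi : 1 ≤ i) (hr1 : 1 ≤ r) (hr : r ≤ M+1)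
    (hi' : 1 ≤ i') (hr1' : 1 ≤ r') (hr'' : r' ≤ M+1)
    (h : jidx M i r = jidx M i' r') : i = i' ∧ r = r' := by
  rcases lt_trichotomy i i' with hc | hc | hc
  · exact absurd h (Nat.ne_of_lt (jidx_lt_of_lt hi hc hr hr1'))
  · subst hc
    refine ⟨rfl, ?_⟩
    rcases lt_trichotomy r r' with hd | hd | hd
    · exact absurd h (Nat.ne_of_lt (jidx_strict_r hi hd))
    · exact hd
    · exact absurd h.symm (Nat.ne_of_lt (jidx_strict_r hi hd))
  · exact absurd h.symm (Nat.ne_of_lt (jidx_lt_of_lt hi' hc hr'' hr1))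

lemma jidx_le_max {M n i r : ℕ} (hi : 1 ≤ i) (hin : i ≤ n) (hr : 1 ≤ r) (hrM : r ≤ M+1) :
    jidx M i r ≤ jidx M n (M+1) := by
  rcases Nat.lt_or_ge i n with h | h
  · exact le_of_lt (jidx_lt_of_lt hi h hrM (by omega))
  · have : i = n := by omega
    subst this
    exact jidx_mono_r hrM

lemma jidx_pos {M i r : ℕ} (hi : 1 ≤ i) (hr : 1 ≤ r) : 1 ≤ jidx M i r := by
  unfold jidx
  have : 1 * 1 ≤ r * i := Nat.mul_le_mul hr hi
  omega

/-- A canonical point of `(0,1)` with prescribed binary digits `g r % 2` at `r = 1..M+1`. -/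
def zOf (M : ℕ) (g : ℕ → ℕ) : ℝ :=
  (exists_real_digits (M+1) (fun k => g k % 2) (fun k => by show g k % 2 ≤ 1; omega)).choose

lemma zOf_mem (M : ℕ) (g : ℕ → ℕ) : zOf M g ∈ Ioo (0:ℝ) 1 :=
  (exists_real_digits (M+1) (fun k => g k % 2) (fun k => by show g k % 2 ≤ 1; omega)).choose_spec.1

lemma zOf_eps (M : ℕ) (g : ℕ → ℕ) (r : ℕ) (h1 : 1 ≤ r) (h2 : r ≤ M+1) :
    eps r (zOf M g) = g r % 2 :=
  (exists_real_digits (M+1) (fun k => g k % 2) (fun k => by show g k % 2 ≤ 1; omega)).choose_spec.2 r h1 h2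

/-- The value of `O` on a point with digits `g`. -/
def Oz (M : ℕ) (O : ℝ → ℝ) (g : ℕ → ℕ) : ℝ := O (zOf M g)

lemma Oz_congr {M : ℕ} {O : ℝ → ℝ} {o : Fin (2 ^ (M + 1)) → ℝ} {R : ℕ → ℝ → ℝ}
    (hS : Setup M O o R) {g g' : ℕ → ℕ}
    (h : ∀ r, 1 ≤ r → r ≤ M+1 → g r % 2 = g' r % 2) : Oz M O g = Oz M O g' := by
  apply hS.O_dep _ (zOf_mem M g) _ (zOf_mem M g')
  intro r hr
  simp only [Finset.mem_Icc] at hr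
  rw [zOf_eps M g r hr.1 hr.2, zOf_eps M g' r hr.1 hr.2, h r hr.1 hr.2]

lemma Oz_inj {M : ℕ} {O : ℝ → ℝ} {o : Fin (2 ^ (M + 1)) → ℝ} {R : ℕ → ℝ → ℝ}
    (hS : Setup M O o R) {g g' : ℕ → ℕ} (h : Oz M O g = Oz M O g') :
    ∀ r, 1 ≤ r → r ≤ M+1 → g r % 2 = g' r % 2 := by
  intro r hr1 hr2
  have := hS.O_inj _ (zOf_mem M g) _ (zOf_mem M g') h r (Finset.mem_Icc.mpr ⟨hr1, hr2⟩)
  rw [zOf_eps M g r hr1 hr2, zOf_eps M g' r hr1 hr2] at this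
  exact this

lemma Oz_mem_range {M : ℕ} {O : ℝ → ℝ} {o : Fin (2 ^ (M + 1)) → ℝ} {R : ℕ → ℝ → ℝ}
    (hS : Setup M O o R) (g : ℕ → ℕ) : Oz M O g ∈ Set.range o := by
  rw [hS.o_range]
  exact ⟨zOf M g, zOf_mem M g, rfl⟩

lemma R_value_on_E {M : ℕ} {O : ℝ → ℝ} {o : Fin (2 ^ (M + 1)) → ℝ} {R : ℕ → ℝ → ℝ}
    (hS : Setup M O o R) {n ℓ' ι : ℕ} (h1 : 1 ≤ ι) (h2 : ι ≤ n)
    {y : ℝ} (hy : y ∈ E M n ℓ') :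
    R ι y = Oz M O (fun r => bitOf (n*(M+1)) ℓ' ((ι-1)*(M+1)+r)) := by
  obtain ⟨hyI, hdig⟩ := hy
  apply hS.R_def ι h1 y hyI _ (zOf_mem M _)
  intro r hr
  have hr' := Finset.mem_Icc.mp hr
  rw [zOf_eps M _ r hr'.1 hr'.2]
  rw [hdig ι (Finset.mem_Icc.mpr ⟨h1, h2⟩) r hr]
  exact Nat.mod_eq_of_lt (bitOf_lt_two _ _ _)

lemma E_nonempty (M n ℓ' : ℕ) : (E M n ℓ').Nonempty := by
  classical
  set w := n*(M+1) with hw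
  set P : ℕ → ℕ × ℕ → Prop := fun q p =>
    1 ≤ p.1 ∧ p.1 ≤ n ∧ 1 ≤ p.2 ∧ p.2 ≤ M+1 ∧ jidx M p.1 p.2 = q with hP
  set f : ℕ → ℕ := fun q =>
    if h : ∃ p, P q p then bitOf w ℓ' ((h.choose.1 - 1)*(M+1) + h.choose.2) else 0 with hfdef
  have hf1 : ∀ q, f q ≤ 1 := by
    intro q
    by_cases h : ∃ p, P q p
    · simp only [hfdef, dif_pos h]; exact bitOf_le_one _ _ _
    · simp only [hfdef, dif_neg h]; omega
  have hfval : ∀ i r, 1 ≤ i → i ≤ n → 1 ≤ r → r ≤ M+1 →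
      f (jidx M i r) = bitOf w ℓ' ((i-1)*(M+1) + r) := by
    intro i r h1 h2 h3 h4
    have hex : ∃ p, P (jidx M i r) p := ⟨(i, r), h1, h2, h3, h4, rfl⟩
    obtain ⟨c1, c2, c3, c4, c5⟩ := hex.choose_spec
    obtain ⟨e1, e2⟩ := jidx_inj c1 c3 c4 h1 h3 h4 c5
    simp only [hfdef, dif_pos hex, e1, e2]
  obtain ⟨y, hy, hdig⟩ := exists_real_digits (jidx M n (M+1)) f hf1
  refine ⟨y, hy, ?_⟩
  intro i hi r hr
  have hi' := Finset.mem_Icc.mp hi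
  have hr' := Finset.mem_Icc.mp hr
  rw [hdig (jidx M i r) (jidx_pos hi'.1 hr'.1) (jidx_le_max hi'.1 hi'.2 hr'.1 hr'.2),
    hfval i r hi'.1 hi'.2 hr'.1 hr'.2]

lemma block_decomp {M n q : ℕ} (h1 : 1 ≤ q) (h2 : q ≤ n*(M+1)) :
    ∃ i r, 1 ≤ i ∧ i ≤ n ∧ 1 ≤ r ∧ r ≤ M+1 ∧ (i-1)*(M+1) + r = q := by
  obtain ⟨a, b, hab, hb, ha⟩ : ∃ a b, (M+1)*a + b = q - 1 ∧ b < M+1 ∧ a < n := by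
    refine ⟨(q-1)/(M+1), (q-1)%(M+1), Nat.div_add_mod _ _, Nat.mod_lt _ (by omega), ?_⟩
    exact (Nat.div_lt_iff_lt_mul (by omega)).mpr (by omega)
  refine ⟨a + 1, b + 1, by omega, by omega, by omega, by omega, ?_⟩
  have he : (a + 1 - 1) = a := by omega
  rw [he, Nat.mul_comm]
  omega

lemma blockpos_div_mod {M i r : ℕ} (h1 : 1 ≤ r) (h2 : r ≤ M+1) :
    (i*(M+1) + r - 1) / (M+1) = i ∧ (i*(M+1) + r - 1) % (M+1) = r - 1 := by
  have he : i*(M+1) + r - 1 = (r-1) + i*(M+1) := by omega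
  rw [he]
  constructor
  · rw [Nat.add_mul_div_right _ _ (by omega : 0 < M+1), Nat.div_eq_of_lt (by omega)]
    omega
  · rw [Nat.add_mul_mod_self_right, Nat.mod_eq_of_lt (by omega)]

lemma block_pos_le {M n i r : ℕ} (h1 : 1 ≤ i) (h2 : i ≤ n) (h3 : 1 ≤ r) (h4 : r ≤ M+1) :
    1 ≤ (i-1)*(M+1) + r ∧ (i-1)*(M+1) + r ≤ n*(M+1) := by
  constructor
  · omega
  · have : (i-1)*(M+1) + (M+1) ≤ n*(M+1) := by
      have h5 : ((i-1)+1)*(M+1) ≤ n*(M+1) := Nat.mul_le_mul_right _ (by omega)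
      have h6 : ((i-1)+1)*(M+1) = (i-1)*(M+1) + (M+1) := by ring
      omega
    omega

lemma Oz_surj {M : ℕ} {O : ℝ → ℝ} {o : Fin (2 ^ (M + 1)) → ℝ} {R : ℕ → ℝ → ℝ}
    (hS : Setup M O o R) (s : Fin (2 ^ (M + 1))) :
    ∃ g : ℕ → ℕ, (∀ k, g k ≤ 1) ∧ Oz M O g = o s := by
  classical
  set ext : (Fin (M+1) → Fin 2) → ℕ → ℕ := fun b k =>
    if hk : 1 ≤ k ∧ k ≤ M+1 then (b ⟨k-1, by omega⟩ : ℕ) else 0 with hext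
  set Φ : (Fin (M+1) → Fin 2) → ℝ := fun b => Oz M O (ext b) with hΦ
  have hΦinj : Function.Injective Φ := by
    intro b b' hbb
    funext j
    have h := Oz_inj hS hbb (j+1) (by omega) (by omega)
    have e1 : ext b (j+1) = (b j : ℕ) := by
      simp only [hext, dif_pos (by omega : 1 ≤ (j:ℕ)+1 ∧ (j:ℕ)+1 ≤ M+1)]
      congr 1
    have e2 : ext b' (j+1) = (b' j : ℕ) := by
      simp only [hext, dif_pos (by omega : 1 ≤ (j:ℕ)+1 ∧ (j:ℕ)+1 ≤ M+1)]
      congr 1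
    rw [e1, e2, Nat.mod_eq_of_lt (b j).isLt, Nat.mod_eq_of_lt (b' j).isLt] at h
    exact Fin.ext h
  have himg : (Finset.univ.image Φ) ⊆ Finset.univ.image o := by
    intro v hv
    obtain ⟨b, _, hb⟩ := Finset.mem_image.mp hv
    obtain ⟨t, ht⟩ := Oz_mem_range hS (ext b)
    have hb' : Oz M O (ext b) = v := hb
    exact Finset.mem_image.mpr ⟨t, Finset.mem_univ _, ht.trans hb'⟩
  have hcard : (Finset.univ.image o).card ≤ (Finset.univ.image Φ).card := by
    rw [Finset.card_image_of_injective _ hΦinj]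
    calc (Finset.univ.image o).card ≤ (Finset.univ : Finset (Fin (2^(M+1)))).card :=
          Finset.card_image_le
      _ = (Finset.univ : Finset (Fin (M+1) → Fin 2)).card := by
          simp [Finset.card_univ, Fintype.card_fun]
  have heq := Finset.eq_of_subset_of_card_le himg hcard
  have : o s ∈ Finset.univ.image Φ := by
    rw [heq]
    exact Finset.mem_image.mpr ⟨s, Finset.mem_univ _, rfl⟩
  obtain ⟨b, _, hb⟩ := Finset.mem_image.mp this
  refine ⟨ext b, ?_, hb⟩
  intro k
  by_cases hk : 1 ≤ k ∧ k ≤ M+1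
  · simp only [hext, dif_pos hk]
    exact Nat.le_of_lt_succ (b ⟨k-1, by omega⟩).isLt
  · simp only [hext, dif_neg hk]
    omega

/-- The midpoint of `D_{n,ℓ}`. -/
def xD (M n ℓ : ℕ) : ℝ := ((ℓ:ℝ) + 2⁻¹) * ((2:ℝ) ^ (n*(M+1)))⁻¹

lemma xD_mem (M n ℓ : ℕ) : xD M n ℓ ∈ D M n ℓ := by
  unfold xD D
  have h2w : (0:ℝ) < ((2:ℝ)^(n*(M+1)))⁻¹ := by positivity
  split_ifs with h
  · subst h
    constructor
    · push_cast
      nlinarith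
    · push_cast
      nlinarith
  · constructor <;> nlinarith

lemma measurableSet_D (M n ℓ : ℕ) : MeasurableSet (D M n ℓ) := by
  unfold D
  split_ifs
  · exact measurableSet_Ioo
  · exact measurableSet_Ico

lemma volume_D (M n ℓ : ℕ) : volume (D M n ℓ) = ((2:ℝ≥0∞) ^ (n*(M+1)))⁻¹ := by
  have h2w : (0:ℝ) < (2:ℝ)^(n*(M+1)) := by positivity
  have key : ENNReal.ofReal (((2:ℝ)^(n*(M+1)))⁻¹) = ((2:ℝ≥0∞) ^ (n*(M+1)))⁻¹ := by
    rw [ENNReal.ofReal_inv_of_pos h2w, ENNReal.ofReal_pow (by norm_num)]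
    norm_num
  unfold D
  split_ifs with h
  · rw [Real.volume_Ioo, ← key]
    congr 1
    ring
  · rw [Real.volume_Ico, ← key]
    congr 1
    ring

lemma set_inter_eq_biUnion {M n : ℕ} (V : ℝ → Prop)
    (hV : ∀ ℓ < 2^(n*(M+1)), ∀ x ∈ D M n ℓ, (V x ↔ V (xD M n ℓ))) :
    {x | V x} ∩ Ioo 0 1 =
      ⋃ ℓ ∈ (Finset.range (2^(n*(M+1)))).filter (fun ℓ => V (xD M n ℓ)), D M n ℓ := by
  ext x
  simp only [Set.mem_inter_iff, Set.mem_setOf_eq, Set.mem_iUnion, Finset.mem_filter,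
    Finset.mem_range, exists_prop]
  constructor
  · rintro ⟨hVx, hx⟩
    obtain ⟨ℓ, hℓ, hmem⟩ := exists_mem_D hx
    exact ⟨ℓ, ⟨hℓ, (hV ℓ hℓ x hmem).mp hVx⟩, hmem⟩
  · rintro ⟨ℓ, ⟨hℓ, hVℓ⟩, hmem⟩
    exact ⟨(hV ℓ hℓ x hmem).mpr hVℓ, D_subset_Ioo hℓ hmem⟩

lemma mu01_eq_card {M n : ℕ} (V : ℝ → Prop)
    (hV : ∀ ℓ < 2^(n*(M+1)), ∀ x ∈ D M n ℓ, (V x ↔ V (xD M n ℓ))) :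
    μ01 {x | V x} =
      (((Finset.range (2^(n*(M+1)))).filter (fun ℓ => V (xD M n ℓ))).card : ℝ≥0∞) *
        ((2:ℝ≥0∞) ^ (n*(M+1)))⁻¹ := by
  unfold μ01
  rw [Measure.restrict_apply' measurableSet_Ioo, set_inter_eq_biUnion V hV,
    MeasureTheory.measure_biUnion_finset (fun a _ b _ hab => D_disjoint hab)
      (fun b _ => measurableSet_D M n b)]
  simp [volume_D]

lemma card_count {c a b : ℕ} (hba : b ≤ a)
    (h : (c:ℝ≥0∞) * ((2:ℝ≥0∞)^a)⁻¹ = ((2:ℝ≥0∞)^b)⁻¹) : c = 2^(a-b) := by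
  have h2a : ((2:ℝ≥0∞)^a) ≠ 0 := by positivity
  have h2a' : ((2:ℝ≥0∞)^a) ≠ ⊤ := by
    exact ENNReal.pow_ne_top (by norm_num)
  have h2b : ((2:ℝ≥0∞)^b) ≠ 0 := by positivity
  have h2b' : ((2:ℝ≥0∞)^b) ≠ ⊤ := ENNReal.pow_ne_top (by norm_num)
  have key : (c:ℝ≥0∞) = (2:ℝ≥0∞)^(a-b) := by
    calc (c:ℝ≥0∞) = (c:ℝ≥0∞) * ((2:ℝ≥0∞)^a)⁻¹ * (2:ℝ≥0∞)^a := by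
          rw [mul_assoc, ENNReal.inv_mul_cancel h2a h2a', mul_one]
      _ = ((2:ℝ≥0∞)^b)⁻¹ * (2:ℝ≥0∞)^a := by rw [h]
      _ = ((2:ℝ≥0∞)^b)⁻¹ * ((2:ℝ≥0∞)^(a-b) * (2:ℝ≥0∞)^b) := by
          rw [← pow_add, Nat.sub_add_cancel hba]
      _ = (2:ℝ≥0∞)^(a-b) * (((2:ℝ≥0∞)^b)⁻¹ * (2:ℝ≥0∞)^b) := by ring
      _ = (2:ℝ≥0∞)^(a-b) := by rw [ENNReal.inv_mul_cancel h2b h2b', mul_one]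
  have : (c:ℝ≥0∞) = ((2^(a-b) : ℕ) : ℝ≥0∞) := by
    rw [key]
    push_cast
    ring
  exact_mod_cast this

lemma sum_Icc_fin (g : ℕ → ℝ) (n : ℕ) :
    ∑ i ∈ Finset.Icc 1 n, g i = ∑ i : Fin n, g ((i:ℕ)+1) := by
  rw [show Finset.Icc 1 n = Finset.Ico 1 (n+1) from rfl, Finset.sum_Ico_eq_sum_range]
  rw [Fin.sum_univ_eq_sum_range (fun i => g (i+1)) n]
  simp [add_comm]

lemma DC_in_range {M : ℕ} {O : ℝ → ℝ} {o : Fin (2 ^ (M + 1)) → ℝ} {R : ℕ → ℝ → ℝ}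
    {n : ℕ} {Rstar : Fin n → ℝ → ℝ}
    (hS : Setup M O o R) (hn : 1 ≤ n)
    (htrim : ∀ i, Trim M n (Rstar i))
    (hprob : ∀ i : Fin n, ∀ s : Fin (2 ^ (M + 1)),
      μ01 { x | Rstar i x = o s } = ((2 : ℝ≥0∞) ^ (M + 1))⁻¹)
    (i : Fin n) {ℓ : ℕ} (hℓ : ℓ < 2^(n*(M+1))) :
    ∃ s : Fin (2^(M+1)), Rstar i (xD M n ℓ) = o s := by
  classical
  set w := n*(M+1) with hw
  have hMw : M+1 ≤ w := by
    calc M+1 = 1*(M+1) := (one_mul _).symm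
      _ ≤ n*(M+1) := Nat.mul_le_mul_right _ hn
  set F : Fin (2^(M+1)) → Finset ℕ :=
    fun s => (Finset.range (2^w)).filter (fun ℓ => Rstar i (xD M n ℓ) = o s) with hF
  have hVresp : ∀ s : Fin (2^(M+1)), ∀ ℓ' < 2^w, ∀ x ∈ D M n ℓ',
      ((fun x => Rstar i x = o s) x ↔ (fun x => Rstar i x = o s) (xD M n ℓ')) := by
    intro s ℓ' hℓ' x hx
    simp only
    rw [htrim i ℓ' hℓ' x hx (xD M n ℓ') (xD_mem M n ℓ')]
  have hVcard : ∀ s, (F s).card = 2^(w - (M+1)) := by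
    intro s
    apply card_count hMw
    rw [← mu01_eq_card (fun x => Rstar i x = o s) (hVresp s)]
    exact hprob i s
  have hdisj : ∀ s ∈ (Finset.univ : Finset (Fin (2^(M+1)))), ∀ t ∈ Finset.univ,
      s ≠ t → Disjoint (F s) (F t) := by
    intro s _ t _ hst
    rw [Finset.disjoint_left]
    intro a ha hb
    simp only [hF, Finset.mem_filter] at ha hb
    exact hst (hS.o_mono.injective (ha.2.symm.trans hb.2))
  have hU : (Finset.univ.biUnion F) = Finset.range (2^w) := by
    apply Finset.eq_of_subset_of_card_le
    · intro a ha
      obtain ⟨s, _, haf⟩ := Finset.mem_biUnion.mp ha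
      simp only [hF, Finset.mem_filter] at haf
      exact haf.1
    · rw [Finset.card_biUnion hdisj, Finset.card_range]
      have : ∑ s : Fin (2^(M+1)), (F s).card = ∑ _s : Fin (2^(M+1)), 2^(w-(M+1)) :=
        Finset.sum_congr rfl (fun s _ => hVcard s)
      rw [this, Finset.sum_const, Finset.card_univ, Fintype.card_fin, smul_eq_mul, ← pow_add]
      apply le_of_eq
      congr 1
      omega
  have hmem : ℓ ∈ Finset.univ.biUnion F := by
    rw [hU]
    exact Finset.mem_range.mpr hℓ
  obtain ⟨s, _, hs⟩ := Finset.mem_biUnion.mp hmem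
  simp only [hF, Finset.mem_filter] at hs
  exact ⟨s, hs.2⟩

lemma DC_inj {M : ℕ} {O : ℝ → ℝ} {o : Fin (2 ^ (M + 1)) → ℝ} {R : ℕ → ℝ → ℝ}
    {n : ℕ} {Rstar : Fin n → ℝ → ℝ}
    (hS : Setup M O o R) (hn : 1 ≤ n)
    (hind : iIndepFun (m := fun _ => Real.measurableSpace) Rstar μ01)
    (htrim : ∀ i, Trim M n (Rstar i))
    (hprob : ∀ i : Fin n, ∀ s : Fin (2 ^ (M + 1)),
      μ01 { x | Rstar i x = o s } = ((2 : ℝ≥0∞) ^ (M + 1))⁻¹)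
    {ℓ₁ ℓ₂ : ℕ} (h1 : ℓ₁ < 2^(n*(M+1))) (h2 : ℓ₂ < 2^(n*(M+1)))
    (h : ∀ i : Fin n, Rstar i (xD M n ℓ₁) = Rstar i (xD M n ℓ₂)) : ℓ₁ = ℓ₂ := by
  classical
  set w := n*(M+1) with hw
  have hsv : ∀ i : Fin n, ∃ s : Fin (2^(M+1)), Rstar i (xD M n ℓ₁) = o s :=
    fun i => DC_in_range hS hn htrim hprob i h1
  choose sv hsv using hsv
  set V : ℝ → Prop := fun x => ∀ i, Rstar i x = o (sv i) with hV
  have hVresp : ∀ ℓ < 2^w, ∀ x ∈ D M n ℓ, (V x ↔ V (xD M n ℓ)) := by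
    intro ℓ hℓ x hx
    constructor <;> intro hq i
    · rw [← htrim i ℓ hℓ x hx _ (xD_mem M n ℓ)]
      exact hq i
    · rw [htrim i ℓ hℓ x hx _ (xD_mem M n ℓ)]
      exact hq i
  have hset : {x | V x} = ⋂ i ∈ (Finset.univ : Finset (Fin n)), Rstar i ⁻¹' {o (sv i)} := by
    ext x
    simp only [hV, Set.mem_setOf_eq, Set.mem_iInter, Set.mem_preimage,
      Set.mem_singleton_iff, Finset.mem_univ, forall_true_left]
  have hmeas := (ProbabilityTheory.iIndepFun_iff_measure_inter_preimage_eq_mul.mp hind)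
      Finset.univ (sets := fun i => {o (sv i)}) (fun i _ => measurableSet_singleton _)
  have hprod : ∏ i ∈ (Finset.univ : Finset (Fin n)), μ01 (Rstar i ⁻¹' {o (sv i)})
      = ((2:ℝ≥0∞)^w)⁻¹ := by
    have hterm : ∀ i : Fin n, μ01 (Rstar i ⁻¹' {o (sv i)}) = ((2:ℝ≥0∞)^(M+1))⁻¹ :=
      fun i => hprob i (sv i)
    rw [Finset.prod_congr rfl (fun i _ => hterm i), Finset.prod_const, Finset.card_univ,
      Fintype.card_fin, ← ENNReal.inv_pow, ← pow_mul, Nat.mul_comm]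
  have hμ : μ01 {x | V x} = ((2:ℝ≥0∞)^w)⁻¹ := by
    rw [hset, hmeas, hprod]
  have hcc := (mu01_eq_card V hVresp).symm.trans hμ
  have h1' := card_count (le_refl w) hcc
  rw [Nat.sub_self, pow_zero, Finset.filter_congr_decidable] at h1'
  refine Finset.card_le_one.mp (le_of_eq h1') _ ?_ _ ?_
  · exact Finset.mem_filter.mpr ⟨Finset.mem_range.mpr h1, fun i => hsv i⟩
  · refine Finset.mem_filter.mpr ⟨Finset.mem_range.mpr h2, fun i => ?_⟩
    rw [← h i]
    exact hsv i

/-- from a good n-tuple (R*_1,…,R*_n) one recovers, for each ℓ, a unique ℓ'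
whose E-constant value of (R_1,…,R_n) matches the D-constant value of (R*_1,…,R*_n),
and ℓ ↦ ℓ' is an admissible permutation. -/
theorem stmt_9 (M : ℕ) (O : ℝ → ℝ) (o : Fin (2 ^ (M + 1)) → ℝ) (R : ℕ → ℝ → ℝ)
    (hS : Setup M O o R) (n : ℕ) (hn : 1 ≤ n)
    (Rstar : Fin n → ℝ → ℝ)
    (hind : iIndepFun (m := fun _ => Real.measurableSpace) Rstar μ01)
    (htrim : ∀ i, Trim M n (Rstar i))
    (hprob : ∀ i : Fin n, ∀ s : Fin (2 ^ (M + 1)),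
      μ01 { x | Rstar i x = o s } = ((2 : ℝ≥0∞) ^ (M + 1))⁻¹)
    (hsum : ∀ x ∈ Ioo (0:ℝ) 1, ∑ i, Rstar i x = Sstar R n x) :
    ∃ π : Equiv.Perm (Fin (2 ^ (n * (M + 1)))),
      Admissible M R n π ∧
      ∀ ℓ : Fin (2 ^ (n * (M + 1))),
        (∀ i : Fin n, ∀ x ∈ D M n (ℓ : ℕ), ∀ y ∈ E M n ((π ℓ : Fin _) : ℕ),
          Rstar i x = R ((i : ℕ) + 1) y) ∧
        ∀ ℓ' : Fin (2 ^ (n * (M + 1))),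
          (∀ i : Fin n, ∀ x ∈ D M n (ℓ : ℕ), ∀ y ∈ E M n (ℓ' : ℕ),
            Rstar i x = R ((i : ℕ) + 1) y) → ℓ' = π ℓ := by
  classical
  set w := n*(M+1) with hw
  -- Existence of a matching E-index for each D-index
  have exQ : ∀ ℓ : Fin (2^w), ∃ ℓ'' : Fin (2^w),
      ∀ i : Fin n, ∀ y ∈ E M n (ℓ'':ℕ), R ((i:ℕ)+1) y = Rstar i (xD M n (ℓ:ℕ)) := by
    intro ℓ
    have hrange : ∀ i : Fin n, ∃ g : ℕ → ℕ,
        (∀ k, g k ≤ 1) ∧ Oz M O g = Rstar i (xD M n (ℓ:ℕ)) := by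
      intro i
      obtain ⟨s, hs⟩ := DC_in_range hS hn htrim hprob i ℓ.isLt
      obtain ⟨g, hg1, hg2⟩ := Oz_surj hS s
      exact ⟨g, hg1, by rw [hg2, hs]⟩
    choose G hG1 hG2 using hrange
    set G' : ℕ → ℕ → ℕ := fun a => if h : a < n then G ⟨a, h⟩ else fun _ => 0 with hG'
    set f : ℕ → ℕ := fun q => G' ((q-1)/(M+1)) ((q-1) % (M+1) + 1) with hfd
    have hf1 : ∀ k, f k ≤ 1 := by
      intro k
      simp only [hfd, hG']
      split_ifs with h
      · exact hG1 _ _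
      · simp
    obtain ⟨L, hL, hbits⟩ := exists_nat_with_bits w f hf1
    refine ⟨⟨L, hL⟩, ?_⟩
    intro i y hy
    have hι1 : 1 ≤ (i:ℕ)+1 := by omega
    have hι2 : (i:ℕ)+1 ≤ n := i.isLt
    rw [R_value_on_E hS hι1 hι2 hy]
    have hOz : Oz M O (fun r => bitOf (n*(M+1)) L (((i:ℕ)+1-1)*(M+1)+r)) = Oz M O (G i) := by
      apply Oz_congr hS
      intro r hr1 hr2
      have hpl := block_pos_le hι1 hι2 hr1 hr2
      have hsimp : ((i:ℕ)+1-1) = (i:ℕ) := by omega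
      rw [hsimp]
      rw [hsimp] at hpl
      rw [show (n*(M+1)) = w from rfl, hbits _ hpl.1 (by rw [hw]; exact hpl.2)]
      have hdm := blockpos_div_mod (i := (i:ℕ)) hr1 hr2
      simp only [hfd, hG', hdm.1, hdm.2]
      rw [dif_pos i.isLt]
      have hr' : ((r:ℕ)-1+1) = r := by omega
      rw [hr']
    rw [hOz, hG2 i]
  -- Uniqueness of the matching E-index
  have uniqQ : ∀ (ℓ a b : Fin (2^w)),
      (∀ i : Fin n, ∀ y ∈ E M n (a:ℕ), R ((i:ℕ)+1) y = Rstar i (xD M n (ℓ:ℕ))) →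
      (∀ i : Fin n, ∀ y ∈ E M n (b:ℕ), R ((i:ℕ)+1) y = Rstar i (xD M n (ℓ:ℕ))) →
      a = b := by
    intro ℓ a b ha hb
    obtain ⟨ya, hya⟩ := E_nonempty M n a
    obtain ⟨yb, hyb⟩ := E_nonempty M n b
    apply Fin.ext
    apply bits_inj a.isLt b.isLt
    intro q hq1 hqw
    obtain ⟨ii, r, hi1, hi2, hr1, hr2, hq⟩ := block_decomp hq1 hqw
    set ι : Fin n := ⟨ii-1, by omega⟩ with hι
    have h1 := ha ι ya hya
    have h2 := hb ι yb hyb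
    have hva := R_value_on_E (ℓ' := (a:ℕ)) hS (show 1 ≤ (ι:ℕ)+1 by omega)
      (show (ι:ℕ)+1 ≤ n by simp [hι]; omega) hya
    have hvb := R_value_on_E (ℓ' := (b:ℕ)) hS (show 1 ≤ (ι:ℕ)+1 by omega)
      (show (ι:ℕ)+1 ≤ n by simp [hι]; omega) hyb
    have hOz : Oz M O (fun r => bitOf (n*(M+1)) (a:ℕ) (((ι:ℕ)+1-1)*(M+1)+r))
        = Oz M O (fun r => bitOf (n*(M+1)) (b:ℕ) (((ι:ℕ)+1-1)*(M+1)+r)) := by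
      rw [← hva, ← hvb, h1, h2]
    have hbit := Oz_inj hS hOz r hr1 hr2
    rw [Nat.mod_eq_of_lt (bitOf_lt_two _ _ _), Nat.mod_eq_of_lt (bitOf_lt_two _ _ _)] at hbit
    have hιv : ((ι:ℕ)+1-1) = ii - 1 := by simp [hι]
    rw [hιv, hq] at hbit
    exact hbit
  choose p hp using exQ
  have hpinj : Function.Injective p := by
    intro ℓ₁ ℓ₂ he
    obtain ⟨y, hy⟩ := E_nonempty M n (p ℓ₁ : ℕ)
    apply Fin.ext
    apply DC_inj hS hn hind htrim hprob ℓ₁.isLt ℓ₂.isLt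
    intro i
    have hy2 : y ∈ E M n (p ℓ₂ : ℕ) := by rw [← he]; exact hy
    rw [← hp ℓ₁ i y hy, ← hp ℓ₂ i y hy2]
  refine ⟨Equiv.ofBijective p (Finite.injective_iff_bijective.mp hpinj), ?_, ?_⟩
  · -- Admissibility
    intro ℓ x hx y hy
    have hxI : x ∈ Ioo (0:ℝ) 1 := D_subset_Ioo ℓ.isLt hx
    rw [← hsum x hxI]
    have hy' : y ∈ E M n ((p ℓ : Fin (2^w)):ℕ) := hy
    have hterm : ∀ i : Fin n, Rstar i x = R ((i:ℕ)+1) y := by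
      intro i
      rw [htrim i ℓ ℓ.isLt x hx _ (xD_mem M n ℓ), ← hp ℓ i y hy']
    rw [Finset.sum_congr rfl (fun i _ => hterm i)]
    unfold S
    rw [sum_Icc_fin (fun i => R i y) n]
  · intro ℓ
    constructor
    · intro i x hx y hy
      have hy' : y ∈ E M n ((p ℓ : Fin (2^w)):ℕ) := hy
      rw [htrim i ℓ ℓ.isLt x hx _ (xD_mem M n ℓ), ← hp ℓ i y hy']
    · intro ℓ' hℓ'
      refine uniqQ ℓ ℓ' (p ℓ) ?_ (hp ℓ)
      intro i y hy
      exact (hℓ' i (xD M n ℓ) (xD_mem M n (ℓ:ℕ)) y hy).symm
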